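/- For ν ∈ ℝ and ζ ∈ ℂ define the 2×2 complex matrix H(ν,ζ) with entries H₁₁ = 1 + ν(ζ − 1), H₁₂ = √3 ν(1 − ν)(ζ − 1), H₂₁ = √3 ν(1 − ζ), H₂₂ = 1 − 3ν(ζ + 1) + 3ν²(ζ − 1). Then for every ν ∈ [0, 1/3] and every ζ ∈ ℂ with |ζ| = 1, every eigenvalue λ of H(ν,ζ) satisfies |λ| ≤ 1. -/

import Mathlib

/-!
If `λ, μ` are the eigenvalues of a `2 × 2` matrix with trace `T` and determinant `D`, then
`T - D T̄ = λ (1 - |μ|²) + μ (1 - |λ|²)`. If `|D| < 1` and `|λ| > 1`, then `|μ| < 1`, and the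
reverse triangle inequality makes `|T - D T̄|` exceed `1 - |D|²` by
`(|λ| - 1)(1 - |μ|)(1 - |λ||μ|) > 0`; so the Schur–Cohn condition `|T - D T̄| ≤ 1 - |D|²` keeps
both eigenvalues in the closed unit disc. If `|D| = 1` (here `ν = 1/3`) the condition reads
`T = D T̄`, which makes `μ = λ / |λ|²`, so `|T| = |λ| + 1 / |λ| > 2` when `|λ| > 1`.

For the LxW-DG matrix on `|ζ| = 1` the Schur–Cohn defect is explicit:
`(1 - |D|²)² - |T - D T̄|² = 48 ν⁴ (1 - ν) (1 - 3ν)² (1 - Re ζ)²`.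
-/

/-- The von Neumann amplification matrix of the piecewise-linear Lax–Wendroff DG scheme. -/
noncomputable def lxwDGAmpMatrix (ν : ℝ) (ζ : ℂ) : Matrix (Fin 2) (Fin 2) ℂ :=
  !![1 + (ν : ℂ) * (ζ - 1),
     (Real.sqrt 3 : ℂ) * (ν : ℂ) * (1 - (ν : ℂ)) * (ζ - 1);
     (Real.sqrt 3 : ℂ) * (ν : ℂ) * (1 - ζ),
     1 - 3 * (ν : ℂ) * (ζ + 1) + 3 * (ν : ℂ) ^ 2 * (ζ - 1)]

open ComplexConjugate

theorem Matrix.exists_add_eq_trace_and_mul_eq_det_of_mem_spectrum {K : Type*} [Field K]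
    {A : Matrix (Fin 2) (Fin 2) K} {r : K} (hr : r ∈ spectrum K A) :
    ∃ s, r + s = A.trace ∧ r * s = A.det := by
  rw [Matrix.mem_spectrum_iff_isRoot_charpoly, Matrix.charpoly_fin_two] at hr
  simp only [Polynomial.IsRoot, Polynomial.eval_add, Polynomial.eval_sub, Polynomial.eval_mul,
    Polynomial.eval_pow, Polynomial.eval_X, Polynomial.eval_C] at hr
  exact ⟨A.trace - r, by ring, by linear_combination -hr⟩

namespace Complex

theorem add_sub_mul_mul_conj_add (a b : ℂ) :
    a + b - a * b * conj (a + b) = a * (1 - ‖b‖ ^ 2 : ℝ) + b * (1 - ‖a‖ ^ 2 : ℝ) := by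
  push_cast
  rw [map_add]
  linear_combination -b * mul_conj' a - a * mul_conj' b

theorem norm_le_one_of_norm_mul_lt_one {a b : ℂ} (hab : ‖a * b‖ < 1)
    (h : ‖a + b - a * b * conj (a + b)‖ ≤ 1 - ‖a * b‖ ^ 2) : ‖a‖ ≤ 1 := by
  by_contra! ha
  rw [norm_mul] at hab h
  have hb : ‖b‖ < 1 := by nlinarith [norm_nonneg b]
  have hlow : ‖a‖ * (1 - ‖b‖ ^ 2) - ‖b‖ * (‖a‖ ^ 2 - 1) ≤ ‖a + b - a * b * conj (a + b)‖ := by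
    rw [add_sub_mul_mul_conj_add, ← sub_neg_eq_add]
    refine (le_of_eq ?_).trans (norm_sub_norm_le _ _)
    rw [norm_neg, norm_mul, norm_mul, norm_real, norm_real,
      Real.norm_of_nonneg (by nlinarith [norm_nonneg b]), Real.norm_of_nonpos (by nlinarith)]
    ring
  nlinarith [mul_pos (mul_pos (sub_pos.2 ha) (sub_pos.2 hb)) (sub_pos.2 hab)]

theorem norm_le_one_of_norm_mul_eq_one {a b : ℂ} (hab : ‖a * b‖ = 1)
    (h : a + b = a * b * conj (a + b)) (h2 : ‖a + b‖ ≤ 2) : ‖a‖ ≤ 1 := by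
  by_contra! ha
  rw [norm_mul] at hab
  have hid := add_sub_mul_mul_conj_add a b
  rw [← h, sub_self] at hid
  have hb : b = a * (‖b‖ ^ 2 : ℝ) := by
    have hx : ((‖a‖ ^ 2 - 1 : ℝ) : ℂ) ≠ 0 := by exact_mod_cast (by nlinarith : ‖a‖ ^ 2 - 1 ≠ 0)
    refine mul_left_cancel₀ hx ?_
    have hxy : ((‖a‖ * ‖b‖ : ℝ) : ℂ) = 1 := by exact_mod_cast hab
    push_cast at hid hxy ⊢
    linear_combination hid - a * (‖a‖ * ‖b‖ + 1) * hxy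
  rw [hb, ← mul_one_add, norm_mul, ← ofReal_one, ← ofReal_add, norm_real,
    Real.norm_of_nonneg (by positivity)] at h2
  nlinarith [sq_nonneg (‖a‖ - 1)]

theorem norm_le_one_of_schurCohn {a b : ℂ} (hab : ‖a * b‖ ≤ 1)
    (h : ‖a + b - a * b * conj (a + b)‖ ≤ 1 - ‖a * b‖ ^ 2) (h2 : ‖a + b‖ ≤ 2) : ‖a‖ ≤ 1 := by
  rcases hab.lt_or_eq with hlt | heq
  · exact norm_le_one_of_norm_mul_lt_one hlt h
  · rw [heq, one_pow, sub_self, norm_le_zero_iff, sub_eq_zero] at h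
    exact norm_le_one_of_norm_mul_eq_one heq h h2

theorem norm_ofReal_add_mul_le {ζ : ℂ} (hζ : ‖ζ‖ = 1) (α β : ℝ) :
    ‖(α : ℂ) + β * ζ‖ ≤ |α| + |β| := by
  simpa only [norm_mul, norm_real, Real.norm_eq_abs, hζ, mul_one] using norm_add_le (α : ℂ) (β * ζ)

theorem norm_sq_ofReal_add_mul_add_mul_conj {ζ : ℂ} (hζ : ‖ζ‖ = 1) (α β γ : ℝ) :
    ‖(α : ℂ) + β * ζ + γ * conj ζ‖ ^ 2 =
      (α + (β + γ) * ζ.re) ^ 2 + (β - γ) ^ 2 * (1 - ζ.re ^ 2) := by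
  have him : ζ.im ^ 2 = 1 - ζ.re ^ 2 := by
    have := Complex.sq_norm ζ
    rw [hζ, normSq_apply] at this
    linear_combination -this
  simp only [Complex.sq_norm, normSq_apply, add_re, add_im, mul_re, mul_im, ofReal_re, ofReal_im,
    conj_re, conj_im]
  linear_combination (β - γ) ^ 2 * him

end Complex

section LxWDG

variable (ν : ℝ) (ζ : ℂ)

theorem lxwDGAmpMatrix_trace :
    (lxwDGAmpMatrix ν ζ).trace = 2 - 4 * ν - 3 * ν ^ 2 + ν * (3 * ν - 2) * ζ := by
  simp only [lxwDGAmpMatrix, Matrix.trace_fin_two_of]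
  ring

theorem lxwDGAmpMatrix_det :
    (lxwDGAmpMatrix ν ζ).det = (1 - ν) * (1 - 3 * ν) - ν * (3 * ν + 2) * ζ := by
  have h3 : (Real.sqrt 3 : ℂ) ^ 2 = 3 := by norm_cast; exact Real.sq_sqrt (by norm_num)
  simp only [lxwDGAmpMatrix, Matrix.det_fin_two_of]
  linear_combination ν ^ 2 * (1 - ν) * (ζ - 1) ^ 2 * h3

variable {ν ζ}

theorem norm_lxwDGAmpMatrix_trace_le (hν₀ : 0 ≤ ν) (hν₁ : ν ≤ 1 / 3) (hζ : ‖ζ‖ = 1) :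
    ‖(lxwDGAmpMatrix ν ζ).trace‖ ≤ 2 := by
  have h := Complex.norm_ofReal_add_mul_le hζ (2 - 4 * ν - 3 * ν ^ 2) (ν * (3 * ν - 2))
  rw [abs_of_nonneg (by nlinarith), abs_of_nonpos (by nlinarith)] at h
  push_cast at h
  rw [lxwDGAmpMatrix_trace]
  exact h.trans (by nlinarith)

theorem norm_lxwDGAmpMatrix_det_le (hν₀ : 0 ≤ ν) (hν₁ : ν ≤ 1 / 3) (hζ : ‖ζ‖ = 1) :
    ‖(lxwDGAmpMatrix ν ζ).det‖ ≤ 1 := by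
  have h := Complex.norm_ofReal_add_mul_le hζ ((1 - ν) * (1 - 3 * ν)) (-(ν * (3 * ν + 2)))
  rw [abs_of_nonneg (by nlinarith), abs_neg, abs_of_nonneg (by positivity)] at h
  push_cast at h
  rw [lxwDGAmpMatrix_det, sub_eq_add_neg, ← neg_mul]
  exact h.trans (by nlinarith)

theorem lxwDGAmpMatrix_schurCohn (hν₀ : 0 ≤ ν) (hν₁ : ν ≤ 1 / 3) (hζ : ‖ζ‖ = 1) :
    ‖(lxwDGAmpMatrix ν ζ).trace - (lxwDGAmpMatrix ν ζ).det * conj (lxwDGAmpMatrix ν ζ).trace‖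
      ≤ 1 - ‖(lxwDGAmpMatrix ν ζ).det‖ ^ 2 := by
  have hzz : ζ * conj ζ = 1 := by rw [Complex.mul_conj', hζ]; simp
  have hD : (lxwDGAmpMatrix ν ζ).det = (((1 - ν) * (1 - 3 * ν) : ℝ) : ℂ)
      + ((-(ν * (3 * ν + 2)) : ℝ) : ℂ) * ζ + ((0 : ℝ) : ℂ) * conj ζ := by
    rw [lxwDGAmpMatrix_det]; push_cast; ring
  have hG : (lxwDGAmpMatrix ν ζ).trace - (lxwDGAmpMatrix ν ζ).det * conj (lxwDGAmpMatrix ν ζ).trace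
      = (((2 - 4 * ν - 3 * ν ^ 2) * (1 - (1 - ν) * (1 - 3 * ν))
            + ν * (3 * ν + 2) * (ν * (3 * ν - 2)) : ℝ) : ℂ)
        + ((ν * (3 * ν - 2) + ν * (3 * ν + 2) * (2 - 4 * ν - 3 * ν ^ 2) : ℝ) : ℂ) * ζ
        + ((-((1 - ν) * (1 - 3 * ν) * (ν * (3 * ν - 2))) : ℝ) : ℂ) * conj ζ := by
    simp only [lxwDGAmpMatrix_trace, lxwDGAmpMatrix_det, map_add, map_sub, map_mul, map_pow,
      map_ofNat, Complex.conj_ofReal]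
    push_cast
    linear_combination (ν * (3 * ν + 2) * (ν * (3 * ν - 2)) : ℂ) * hzz
  have hDle := pow_le_one₀ (norm_nonneg _) (norm_lxwDGAmpMatrix_det_le hν₀ hν₁ hζ) (n := 2)
  refine le_of_sq_le_sq ?_ (sub_nonneg.2 hDle)
  rw [hG, hD, Complex.norm_sq_ofReal_add_mul_add_mul_conj hζ,
    Complex.norm_sq_ofReal_add_mul_add_mul_conj hζ]
  have hdefect : 0 ≤ 48 * ν ^ 4 * (1 - ν) * (1 - 3 * ν) ^ 2 * (1 - ζ.re) ^ 2 := by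
    have : 0 ≤ 1 - ν := by linarith
    positivity
  linear_combination hdefect

end LxWDG

/-- The piecewise-linear LxW-DG scheme is von Neumann stable for CFL numbers
`0 ≤ ν ≤ 1/3`. -/
theorem lxwDG_stable (ν : ℝ) (hν : ν ∈ Set.Icc (0 : ℝ) (1 / 3)) (ζ : ℂ) (hζ : ‖ζ‖ = 1)
    (lam : ℂ) (hlam : lam ∈ spectrum ℂ (lxwDGAmpMatrix ν ζ)) : ‖lam‖ ≤ 1 := by
  obtain ⟨hν₀, hν₁⟩ := hν
  obtain ⟨μ, hsum, hprod⟩ := Matrix.exists_add_eq_trace_and_mul_eq_det_of_mem_spectrum hlam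
  refine Complex.norm_le_one_of_schurCohn (b := μ) ?_ ?_ ?_
  · rw [hprod]; exact norm_lxwDGAmpMatrix_det_le hν₀ hν₁ hζ
  · rw [hsum, hprod]; exact lxwDGAmpMatrix_schurCohn hν₀ hν₁ hζ
  · rw [hsum]; exact norm_lxwDGAmpMatrix_trace_le hν₀ hν₁ hζ
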